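/- arXiv:2001.00937 — 8 statements merged into one kernel-verified Lean document; each statement's English description precedes it below -/
import Mathlib

section
/- Let d ≥ 1 and n ≥ 0 be integers, let ι be a finite index set with |ι| = m, and let x : ι → ℝ^d be a family of points. If m ≥ n(d+1) + 1, then Ψ(x, n) is nonempty. -/
/-- `Psi x n` is the intersection, over all subsets `S` of the (finite) index set
with `|S| = m - n` (where `m` is the cardinality of the index set), of the convex
hull of the points indexed by `S`. -/
def Psi {d : ℕ} {ι : Type*} [Fintype ι] (x : ι → (Fin d → ℝ)) (n : ℕ) :
    Set (Fin d → ℝ) :=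
  ⋂ S ∈ {S : Finset ι | S.card = Fintype.card ι - n},
    convexHull ℝ (x '' (S : Set ι))

theorem stmt0 (d n m : ℕ) (hd : 1 ≤ d) {ι : Type*} [Fintype ι]
    (hm : Fintype.card ι = m) (x : ι → (Fin d → ℝ))
    (h : n * (d + 1) + 1 ≤ m) :
    (Psi x n).Nonempty := by
  classical
  have hrank : Module.finrank ℝ (Fin d → ℝ) = d := by
    simp [Module.finrank_fintype_fun_eq_card]
  -- the finset of index subsets of cardinality m - n
  set s : Finset (Finset ι) := Finset.univ.filter (fun S => S.card = Fintype.card ι - n) with hs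
  have hPsi : Psi x n = ⋂ S ∈ s, convexHull ℝ (x '' (S : Set ι)) := by
    unfold Psi
    apply Set.iInter_congr
    intro S
    simp [hs]
  rw [hPsi]
  apply Convex.helly_theorem' (𝕜 := ℝ)
  · intro S _
    exact convex_convexHull ℝ _
  · intro I hI hIcard
    rw [hrank] at hIcard
    -- find a common index j in all S ∈ I
    have hninter : (Finset.univ.filter (fun j : ι => ∀ S ∈ I, j ∈ S)).Nonempty := by
      by_contra hc
      rw [Finset.not_nonempty_iff_eq_empty] at hc
      -- every j misses some S ∈ I, so univ ⊆ ⋃ S ∈ I, Sᶜ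
      have hsub : (Finset.univ : Finset ι) ⊆ I.biUnion (fun S => Sᶜ) := by
        intro j _
        rw [Finset.mem_biUnion]
        by_contra hj
        push_neg at hj
        have : j ∈ Finset.univ.filter (fun j : ι => ∀ S ∈ I, j ∈ S) := by
          simp only [Finset.mem_filter, Finset.mem_univ, true_and]
          intro S hS
          have := hj S hS
          simpa using this
        simp [hc] at this
      have hcard := Finset.card_le_card hsub
      have hbound : (I.biUnion (fun S => Sᶜ)).card ≤ I.card * n := by
        calc (I.biUnion (fun S => Sᶜ)).card ≤ ∑ S ∈ I, Sᶜ.card :=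
              Finset.card_biUnion_le
        _ ≤ ∑ S ∈ I, n := by
              apply Finset.sum_le_sum
              intro S hS
              have hS' : S ∈ s := hI hS
              simp only [hs, Finset.mem_filter] at hS'
              rw [Finset.card_compl, hS'.2]
              omega
        _ = I.card * n := by rw [Finset.sum_const, smul_eq_mul]
      rw [Finset.card_univ, hm] at hcard
      have : I.card * n ≤ (d + 1) * n := Nat.mul_le_mul_right n hIcard
      nlinarith
    obtain ⟨j, hj⟩ := hninter
    simp only [Finset.mem_filter, Finset.mem_univ, true_and] at hj
    refine ⟨x j, ?_⟩
    rw [Set.mem_iInter₂]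
    intro S hS
    exact subset_convexHull ℝ _ ⟨j, by simpa using hj S hS, rfl⟩
end

section
/- Let d ≥ 1 and n ≥ 0 be integers, let ι be a finite index set with |ι| = (d+1)n + 1, let x : ι → ℝ^d, and let l : ℝ^d → ℝ be a linear functional. (1) If m ∈ ℝ and there exist at least dn + 1 indices j ∈ ι with l(x_j) ≤ m, then every y ∈ Ψ(x, n) satisfies l(y) ≤ m. (2) If M ∈ ℝ and there exist at least dn + 1 indices j ∈ ι with l(x_j) ≥ M, then every z ∈ Ψ(x, n) satisfies l(z) ≥ M. -/
lemma psi_mem_convex {d n : ℕ} {ι : Type*} [Fintype ι] (x : ι → (Fin d → ℝ))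
    {C : Set (Fin d → ℝ)} (hC : Convex ℝ C) (T : Finset ι)
    (hT : Fintype.card ι - n ≤ T.card) (hTx : ∀ j ∈ T, x j ∈ C) :
    ∀ y ∈ Psi x n, y ∈ C := by
  intro y hy
  obtain ⟨S, hST, hScard⟩ := Finset.exists_subset_card_eq hT
  have hyS : y ∈ convexHull ℝ (x '' (S : Set ι)) := by
    simp only [Psi, Set.mem_iInter, Set.mem_setOf_eq] at hy
    exact hy S hScard
  have : convexHull ℝ (x '' (S : Set ι)) ⊆ C := by
    apply convexHull_min _ hC
    rintro _ ⟨j, hj, rfl⟩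
    exact hTx j (hST hj)
  exact this hyS

theorem stmt4 (d n : ℕ) (hd : 1 ≤ d) {ι : Type*} [Fintype ι]
    (hcard : Fintype.card ι = (d + 1) * n + 1)
    (x : ι → (Fin d → ℝ)) (l : (Fin d → ℝ) →ₗ[ℝ] ℝ) :
    (∀ m : ℝ,
      d * n + 1 ≤ (Finset.univ.filter (fun j : ι => l (x j) ≤ m)).card →
      ∀ y ∈ Psi x n, l y ≤ m) ∧
    (∀ M : ℝ,
      d * n + 1 ≤ (Finset.univ.filter (fun j : ι => M ≤ l (x j))).card →
      ∀ z ∈ Psi x n, M ≤ l z) := by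
  have hsub : Fintype.card ι - n = d * n + 1 := by
    rw [hcard]; ring_nf; omega
  constructor
  · intro m hm y hy
    refine psi_mem_convex x (convex_halfSpace_le l.isLinear m)
      (Finset.univ.filter (fun j : ι => l (x j) ≤ m)) (by omega)
      (fun j hj => (Finset.mem_filter.mp hj).2) y hy
  · intro M hM z hz
    refine psi_mem_convex x (convex_halfSpace_ge l.isLinear M)
      (Finset.univ.filter (fun j : ι => M ≤ l (x j))) (by omega)
      (fun j hj => (Finset.mem_filter.mp hj).2) z hz
end

section
/- Let d ≥ 1 and F ≥ 0 be integers, let ι be a finite index set with |ι| ≥ (d+1)F + 1, let x : ι → ℝ^d, and let p ∈ {1, …, d}; write x_j(p) for the p-th coordinate of x_j. Let Y ⊆ ι with |Y| = (d+1)F + 1 be such that x_a(p) ≤ x_b(p) for all a ∈ Y and b ∈ ι \ Y, and let Z ⊆ ι with |Z| = (d+1)F + 1 be such that x_a(p) ≥ x_b(p) for all a ∈ Z and b ∈ ι \ Z. If c ∈ ℝ is such that at least dF + 1 indices j ∈ ι satisfy x_j(p) ≤ c, then every y ∈ Ψ(x restricted to Y, F) satisfies y(p) ≤ c; and if C ∈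 ℝ is such that at least dF + 1 indices j ∈ ι satisfy x_j(p) ≥ C, then every z ∈ Ψ(x restricted to Z, F) satisfies z(p) ≥ C. -/
/-! A point of `Psi (x|W) n` lies in the convex hull of every `#W - n` of the points of `W`, hence
in every convex set containing that many of them; for `W = Y`, `n = F` this number is `dF + 1` and
the convex set is the half-space `{v | v p ≤ c}`. That half-space contains `dF + 1` points of `Y`:
either every index with `x j p ≤ c` lies in `Y`, or one lies outside `Y`, and then all of `Y` lies
below it. The claim for `Z` is symmetric. -/

open Finset

theorem forall_mem_Psi_of_card_le {d : ℕ} {ι : Type*} [Fintype ι] (x : ι → (Fin d → ℝ))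
    (n : ℕ) {P : (Fin d → ℝ) → Prop} [DecidablePred P] (hP : Convex ℝ {v | P v})
    (hcard : Fintype.card ι - n ≤ #{j | P (x j)}) : ∀ y ∈ Psi x n, P y := by
  intro y hy
  obtain ⟨S, hSs, hScard⟩ := exists_subset_card_eq hcard
  refine convexHull_min ?_ hP (Set.mem_iInter₂.mp hy S hScard)
  rintro _ ⟨j, hj, rfl⟩
  exact (mem_filter.mp (hSs hj)).2

theorem forall_mem_Psi_restrict_of_card_le {d : ℕ} {ι : Type*} (x : ι → (Fin d → ℝ))
    (n : ℕ) (W : Finset ι) {P : (Fin d → ℝ) → Prop} [DecidablePred P]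
    (hP : Convex ℝ {v | P v})
    (hcard : #W - n ≤ #{j ∈ W | P (x j)}) : ∀ y ∈ Psi (fun j : W => x j) n, P y := by
  refine forall_mem_Psi_of_card_le _ n hP ?_
  rwa [Fintype.card_coe, univ_eq_attach, filter_attach (fun j => P (x j)), card_map,
    card_attach]

theorem Finset.le_card_filter_of_forall_notMem_imp {ι : Type*} [Fintype ι] {Y : Finset ι}
    {P : ι → Prop} [DecidablePred P] (hP : ∀ a ∈ Y, ∀ b ∉ Y, P b → P a) {k : ℕ}
    (hY : k ≤ #Y) (hk : k ≤ #{j | P j}) : k ≤ #{j ∈ Y | P j} := by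
  by_cases hsub : ∀ j, P j → j ∈ Y
  · refine hk.trans (card_le_card fun j hj => ?_)
    have hPj := (mem_filter.mp hj).2
    exact mem_filter.mpr ⟨hsub j hPj, hPj⟩
  · push Not at hsub
    obtain ⟨b, hPb, hbY⟩ := hsub
    rwa [filter_true_of_mem fun a ha => hP a ha b hbY hPb]

theorem stmt5_general (d F : ℕ) {ι : Type*} [Fintype ι]
    (x : ι → (Fin d → ℝ)) (p : Fin d)
    (Y Z : Finset ι)
    (hYcard : Y.card = (d + 1) * F + 1) (hZcard : Z.card = (d + 1) * F + 1)
    (hY : ∀ a ∈ Y, ∀ b : ι, b ∉ Y → x a p ≤ x b p)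
    (hZ : ∀ a ∈ Z, ∀ b : ι, b ∉ Z → x b p ≤ x a p) :
    (∀ c : ℝ,
      d * F + 1 ≤ (Finset.univ.filter (fun j : ι => x j p ≤ c)).card →
      ∀ y ∈ Psi (fun j : Y => x j) F, y p ≤ c) ∧
    (∀ C : ℝ,
      d * F + 1 ≤ (Finset.univ.filter (fun j : ι => C ≤ x j p)).card →
      ∀ z ∈ Psi (fun j : Z => x j) F, C ≤ z p) := by
  have hsize : (d + 1) * F + 1 - F = d * F + 1 := by rw [add_one_mul]; omega
  constructor
  · intro c hc
    refine forall_mem_Psi_restrict_of_card_le x F Y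
      (convex_halfSpace_le ⟨fun _ _ => rfl, fun _ _ => rfl⟩ c) ?_
    rw [hYcard, hsize]
    exact le_card_filter_of_forall_notMem_imp (fun a ha b hb hbc => (hY a ha b hb).trans hbc)
      (by omega) hc
  · intro C hC
    refine forall_mem_Psi_restrict_of_card_le x F Z
      (convex_halfSpace_ge ⟨fun _ _ => rfl, fun _ _ => rfl⟩ C) ?_
    rw [hZcard, hsize]
    exact le_card_filter_of_forall_notMem_imp (fun a ha b hb hCb => hCb.trans (hZ a ha b hb))
      (by omega) hC

theorem stmt5 (d F : ℕ) (hd : 1 ≤ d) {ι : Type*} [Fintype ι] [DecidableEq ι]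
    (hcard : (d + 1) * F + 1 ≤ Fintype.card ι)
    (x : ι → (Fin d → ℝ)) (p : Fin d)
    (Y Z : Finset ι)
    (hYcard : Y.card = (d + 1) * F + 1) (hZcard : Z.card = (d + 1) * F + 1)
    (hY : ∀ a ∈ Y, ∀ b : ι, b ∉ Y → x a p ≤ x b p)
    (hZ : ∀ a ∈ Z, ∀ b : ι, b ∉ Z → x b p ≤ x a p) :
    (∀ c : ℝ,
      d * F + 1 ≤ (Finset.univ.filter (fun j : ι => x j p ≤ c)).card →
      ∀ y ∈ Psi (fun j : Y => x j) F, y p ≤ c) ∧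
    (∀ C : ℝ,
      d * F + 1 ≤ (Finset.univ.filter (fun j : ι => C ≤ x j p)).card →
      ∀ z ∈ Psi (fun j : Z => x j) F, C ≤ z p) :=
  stmt5_general d F x p Y Z hYcard hZcard hY hZ
end

section
/- Under the Algorithm 1 setup, if every agent has at most F misbehaving neighbors, i.e., |𝓕 ∩ N_i| ≤ F for all i ∈ V (which holds under both the F-local and the F-total attack models), then Ω(k+1) ⊆ Ω(k) for every k ≥ 0; that is, the convex hull of the benign agents' states never expands, so every benign state remains in the convex hull Ω(0) of the benign agents' initial states. -/
/-- The setup of Algorithm 1: `G` is the (undirected) communication graph on the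
finite vertex set `V` in which every vertex has at least `(d+1)F + 1` neighbors,
`Fset` is the set of misbehaving agents, `x k i` is the state of agent `i` at time
`k`, and `msg k j i` is the value agent `j` sends to agent `i` at time `k` (equal
to `x k j` whenever `j` is benign).  Every benign agent `i` updates at time `k` by
sorting on coordinate `p = (k % d) + 1` (0-indexed: `k % d`): it chooses sets
`Y`, `Z` of `(d+1)F + 1` neighbors whose received values are smallest (resp.
largest) in that coordinate, picks middle points `y ∈ Ψ(Y-values, F)` and
`z ∈ Ψ(Z-values, F)`, and sets `x (k+1) i = (x k i + y + z) / 3`. -/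
structure Algo1 {V : Type*} [Fintype V] [DecidableEq V]
    (d F : ℕ) (hd : 0 < d) (G : SimpleGraph V) [DecidableRel G.Adj]
    (Fset : Finset V) (x : ℕ → V → (Fin d → ℝ))
    (msg : ℕ → V → V → (Fin d → ℝ)) : Prop where
  degree : ∀ i : V, (d + 1) * F + 1 ≤ (G.neighborFinset i).card
  benign_msg : ∀ (k : ℕ) (j i : V), j ∉ Fset → msg k j i = x k j
  update : ∀ (k : ℕ) (i : V), i ∉ Fset →
    ∃ (Y Z : Finset V) (yv zv : Fin d → ℝ),
      Y ⊆ G.neighborFinset i ∧ Z ⊆ G.neighborFinset i ∧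
      Y.card = (d + 1) * F + 1 ∧ Z.card = (d + 1) * F + 1 ∧
      (∀ a ∈ Y, ∀ b ∈ G.neighborFinset i, b ∉ Y →
        msg k a i ⟨k % d, Nat.mod_lt k hd⟩ ≤ msg k b i ⟨k % d, Nat.mod_lt k hd⟩) ∧
      (∀ a ∈ Z, ∀ b ∈ G.neighborFinset i, b ∉ Z →
        msg k b i ⟨k % d, Nat.mod_lt k hd⟩ ≤ msg k a i ⟨k % d, Nat.mod_lt k hd⟩) ∧
      yv ∈ Psi (fun j : Y => msg k j i) F ∧
      zv ∈ Psi (fun j : Z => msg k j i) F ∧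
      x (k + 1) i = ((1 : ℝ) / 3) • (x k i + yv + zv)

/-!
A point of `Psi x F` lies in the convex hull of every `m - F` of the points; when at most `F` of
the senders are misbehaving, those can all be taken benign, and benign senders report their true
states. So both trimmed points `y`, `z` of a benign agent lie in `Ω(k)`, hence so does its new
state `(x + y + z) / 3`, and `Ω` is antitone.
-/

theorem Psi_subset_convexHull {d n : ℕ} {ι : Type*} [Fintype ι] (x : ι → Fin d → ℝ)
    {s : Finset ι} (hs : Fintype.card ι - n ≤ s.card) :
    Psi x n ⊆ convexHull ℝ (x '' s) := by
  obtain ⟨S, hSs, hScard⟩ := Finset.exists_subset_card_eq hs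
  exact Set.iInter₂_subset_of_subset S hScard (convexHull_mono (Set.image_mono hSs))

theorem Psi_subtype_subset_convexHull_sdiff {d n : ℕ} {V : Type*} [DecidableEq V]
    (f : V → Fin d → ℝ) {W B : Finset V} (hWB : (W ∩ B).card ≤ n) :
    Psi (fun j : W => f j) n ⊆ convexHull ℝ (f '' ↑(W \ B)) := by
  have hcard : Fintype.card W - n ≤ ((W \ B).subtype (· ∈ W)).card := by
    rw [Fintype.card_coe, Finset.card_subtype,
      Finset.filter_true_of_mem fun _ hj => (Finset.mem_sdiff.mp hj).1]
    have := Finset.card_sdiff_add_card_inter W B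
    omega
  refine (Psi_subset_convexHull _ hcard).trans (convexHull_mono ?_)
  rintro _ ⟨j, hj, rfl⟩
  exact ⟨j, Finset.mem_subtype.mp hj, rfl⟩

theorem Convex.third_smul_add_add_mem {E : Type*} [AddCommGroup E] [Module ℝ E] {s : Set E}
    (hs : Convex ℝ s) {a b c : E} (ha : a ∈ s) (hb : b ∈ s) (hc : c ∈ s) :
    ((1 : ℝ) / 3) • (a + b + c) ∈ s := by
  have hab : ((1 : ℝ) / 2) • a + ((1 : ℝ) / 2) • b ∈ s :=
    hs ha hb (by norm_num) (by norm_num) (by norm_num)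
  convert hs hab hc (a := 2 / 3) (b := 1 / 3) (by norm_num) (by norm_num) (by norm_num)
    using 1
  module

namespace Algo1

variable {V : Type*} [Fintype V] [DecidableEq V] {d F : ℕ} {hd : 0 < d} {G : SimpleGraph V}
  [DecidableRel G.Adj] {Fset : Finset V} {x : ℕ → V → (Fin d → ℝ)}
  {msg : ℕ → V → V → (Fin d → ℝ)}

theorem Psi_subset_convexHull_benign (halg : Algo1 d F hd G Fset x msg)
    (hlocal : ∀ i : V, (Fset ∩ G.neighborFinset i).card ≤ F) {k : ℕ} {i : V} {W : Finset V}
    (hW : W ⊆ G.neighborFinset i) :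
    Psi (fun j : W => msg k j i) F ⊆ convexHull ℝ (x k '' ((Fsetᶜ : Finset V) : Set V)) := by
  have hbad : (W ∩ Fset).card ≤ F := by
    rw [Finset.inter_comm]
    exact (Finset.card_le_card (Finset.inter_subset_inter_left hW)).trans (hlocal i)
  refine (Psi_subtype_subset_convexHull_sdiff (fun j => msg k j i) hbad).trans
    (convexHull_mono ?_)
  rintro _ ⟨j, hj, rfl⟩
  have hjF : j ∉ Fset := (Finset.mem_sdiff.mp hj).2
  exact ⟨j, Finset.mem_compl.mpr hjF, (halg.benign_msg k j i hjF).symm⟩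

theorem succ_mem_convexHull (halg : Algo1 d F hd G Fset x msg)
    (hlocal : ∀ i : V, (Fset ∩ G.neighborFinset i).card ≤ F) (k : ℕ) {i : V} (hi : i ∉ Fset) :
    x (k + 1) i ∈ convexHull ℝ (x k '' ((Fsetᶜ : Finset V) : Set V)) := by
  obtain ⟨Y, Z, y, z, hY, hZ, -, -, -, -, hy, hz, hupdate⟩ := halg.update k i hi
  rw [hupdate]
  exact (convex_convexHull ℝ _).third_smul_add_add_mem
    (subset_convexHull ℝ _ ⟨i, Finset.mem_compl.mpr hi, rfl⟩)
    (halg.Psi_subset_convexHull_benign hlocal hY hy)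
    (halg.Psi_subset_convexHull_benign hlocal hZ hz)

end Algo1

theorem stmt8 {V : Type*} [Fintype V] [DecidableEq V]
    (d F : ℕ) (hd : 0 < d) (G : SimpleGraph V) [DecidableRel G.Adj]
    (Fset : Finset V) (x : ℕ → V → (Fin d → ℝ))
    (msg : ℕ → V → V → (Fin d → ℝ))
    (halg : Algo1 d F hd G Fset x msg)
    (hlocal : ∀ i : V, (Fset ∩ G.neighborFinset i).card ≤ F) :
    (∀ k : ℕ,
      convexHull ℝ ((fun i : V => x (k + 1) i) '' (Fsetᶜ : Finset V)) ⊆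
        convexHull ℝ ((fun i : V => x k i) '' (Fsetᶜ : Finset V))) ∧
    (∀ (k : ℕ) (i : V), i ∉ Fset →
      x k i ∈ convexHull ℝ ((fun i : V => x 0 i) '' (Fsetᶜ : Finset V))) := by
  have hanti : Antitone fun k => convexHull ℝ (x k '' ((Fsetᶜ : Finset V) : Set V)) :=
    antitone_nat_of_succ_le fun k => convexHull_min
      (by rintro _ ⟨i, hi, rfl⟩; exact halg.succ_mem_convexHull hlocal k (Finset.mem_compl.mp hi))
      (convex_convexHull ℝ _)
  exact ⟨fun k => hanti k.le_succ,
    fun k i hi => hanti k.zero_le (subset_convexHull ℝ _ ⟨i, Finset.mem_compl.mpr hi, rfl⟩)⟩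
end

section
/- Under the Algorithm 1 setup with 𝓑 ≠ ∅ and |𝓕 ∩ N_i| ≤ F for all i ∈ V: for every p ∈ {1, …, d} and every k ≥ 0, m_p(k+1) ≥ m_p(k) and M_p(k+1) ≤ M_p(k). -/
/-!
Every point of `Ψ(x, n)` lies in the convex hull of any `m - n` of the points. A benign agent
has at most `F` misbehaving neighbours, so among the values it receives from `Y` (or `Z`) at
least `|Y| - F` are true states of benign agents; hence `y` and `z` lie in every convex set
containing all benign states, and so does the convex combination `(x + y + z) / 3`. Applied to
the slab `{v | m_p(k) ≤ v_p ≤ M_p(k)}` this gives the monotonicity of `m_p` and `M_p`.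
-/

open Finset

theorem Psi_subset_of_forall_mem {d : ℕ} {ι : Type*} [Fintype ι] {x : ι → Fin d → ℝ} {n : ℕ}
    {C : Set (Fin d → ℝ)} (hC : Convex ℝ C) (T : Finset ι)
    (hT : Fintype.card ι - n ≤ #T) (hTC : ∀ j ∈ T, x j ∈ C) : Psi x n ⊆ C := by
  obtain ⟨S, hST, hS⟩ := exists_subset_card_eq hT
  have hPsi : Psi x n ⊆ convexHull ℝ (x '' (S : Set ι)) :=
    Set.biInter_subset_of_mem (by simpa using hS)
  refine hPsi.trans (convexHull_min ?_ hC)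
  rintro _ ⟨j, hj, rfl⟩
  exact hTC j (hST hj)

theorem Psi_subtype_subset_of_card_inter_le {d : ℕ} {V : Type*} [DecidableEq V]
    {y : V → Fin d → ℝ} {n : ℕ}
    {C : Set (Fin d → ℝ)} (hC : Convex ℝ C) (W Fset : Finset V) (hbad : #(Fset ∩ W) ≤ n)
    (hgood : ∀ j ∈ W, j ∉ Fset → y j ∈ C) : Psi (fun j : W => y j) n ⊆ C := by
  refine Psi_subset_of_forall_mem hC ((W \ Fset).subtype (· ∈ W)) ?_ ?_
  · have hgood_card : #((W \ Fset).subtype (· ∈ W)) = #W - #(Fset ∩ W) := by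
      rw [card_subtype, filter_true_of_mem fun j hj => (mem_sdiff.mp hj).1, card_sdiff]
    rw [Fintype.card_coe, hgood_card]
    omega
  · intro j hj
    exact hgood j j.2 (mem_sdiff.mp (mem_subtype.mp hj)).2

theorem Convex.one_div_three_smul_add_add_mem {E : Type*} [AddCommGroup E] [Module ℝ E]
    {C : Set E} (hC : Convex ℝ C) {a b c : E} (ha : a ∈ C) (hb : b ∈ C) (hc : c ∈ C) :
    ((1 : ℝ) / 3) • (a + b + c) ∈ C := by
  have hbc : ((1 : ℝ) / 2) • b + ((1 : ℝ) / 2) • c ∈ C :=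
    hC hb hc (by norm_num) (by norm_num) (by norm_num)
  have habc : ((1 : ℝ) / 3) • a + ((2 : ℝ) / 3) • (((1 : ℝ) / 2) • b + ((1 : ℝ) / 2) • c) ∈ C :=
    hC ha hbc (by norm_num) (by norm_num) (by norm_num)
  convert habc using 1
  module

section Algo1

variable {V : Type*} [Fintype V] [DecidableEq V] {d F : ℕ} {hd : 0 < d} {G : SimpleGraph V}
  [DecidableRel G.Adj] {Fset : Finset V} {x : ℕ → V → (Fin d → ℝ)}
  {msg : ℕ → V → V → (Fin d → ℝ)}

theorem Algo1.mem_of_forall_benign_mem (halg : Algo1 d F hd G Fset x msg)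
    (hlocal : ∀ i : V, #(Fset ∩ G.neighborFinset i) ≤ F) {C : Set (Fin d → ℝ)}
    (hC : Convex ℝ C) {k : ℕ} (hk : ∀ j ∉ Fset, x k j ∈ C) {i : V} (hi : i ∉ Fset) :
    x (k + 1) i ∈ C := by
  have hPsi : ∀ W ⊆ G.neighborFinset i, Psi (fun j : W => msg k j i) F ⊆ C := fun W hW =>
    Psi_subtype_subset_of_card_inter_le (y := fun j => msg k j i) hC W Fset
      ((card_le_card (inter_subset_inter_left hW)).trans (hlocal i))
      fun j _ hj => by rw [halg.benign_msg k j i hj]; exact hk j hj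
  obtain ⟨Y, Z, yv, zv, hY, hZ, -, -, -, -, hyv, hzv, hupdate⟩ := halg.update k i hi
  rw [hupdate]
  exact hC.one_div_three_smul_add_add_mem (hk i hi) (hPsi Y hY hyv) (hPsi Z hZ hzv)

end Algo1

theorem stmt9 {V : Type*} [Fintype V] [DecidableEq V]
    (d F : ℕ) (hd : 0 < d) (G : SimpleGraph V) [DecidableRel G.Adj]
    (Fset : Finset V) (x : ℕ → V → (Fin d → ℝ))
    (msg : ℕ → V → V → (Fin d → ℝ))
    (halg : Algo1 d F hd G Fset x msg)
    (hB : (Fsetᶜ : Finset V).Nonempty)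
    (hlocal : ∀ i : V, (Fset ∩ G.neighborFinset i).card ≤ F) :
    ∀ (p : Fin d) (k : ℕ),
      (Fsetᶜ : Finset V).inf' hB (fun i => x k i p) ≤
        (Fsetᶜ : Finset V).inf' hB (fun i => x (k + 1) i p) ∧
      (Fsetᶜ : Finset V).sup' hB (fun i => x (k + 1) i p) ≤
        (Fsetᶜ : Finset V).sup' hB (fun i => x k i p) := by
  intro p k
  set m := (Fsetᶜ : Finset V).inf' hB (fun i => x k i p)
  set M := (Fsetᶜ : Finset V).sup' hB (fun i => x k i p)
  have hslab : Convex ℝ ((fun v : Fin d → ℝ => v p) ⁻¹' Set.Icc m M) :=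
    (convex_Icc m M).linear_preimage (LinearMap.proj (R := ℝ) (φ := fun _ : Fin d => ℝ) p)
  have hk : ∀ j ∉ Fset, x k j p ∈ Set.Icc m M := fun j hj =>
    ⟨inf'_le _ (mem_compl.mpr hj), le_sup' (fun i => x k i p) (mem_compl.mpr hj)⟩
  have hk1 : ∀ i ∈ Fsetᶜ, x (k + 1) i p ∈ Set.Icc m M := fun i hi =>
    halg.mem_of_forall_benign_mem hlocal hslab hk (mem_compl.mp hi)
  exact ⟨le_inf' _ _ fun i hi => (hk1 i hi).1, sup'_le _ _ fun i hi => (hk1 i hi).2⟩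
end

section
/- Under the Algorithm 1 setup with the F-local attack model: let k ≥ 0, let p = (k mod d) + 1, let i ∈ 𝓑, and let M ∈ ℝ and ε ≥ 0. If x^j_p(k) ≤ M for every benign agent j ∈ 𝓑 (where subscript p denotes the p-th coordinate), and at least dF + 1 neighbors j ∈ N_i satisfy msg(k, j, i)_p ≤ M − ε, then x^i_p(k+1) ≤ M − ε/3. -/
lemma psi_sub {d n : ℕ} {ι : Type*} [Fintype ι] {x : ι → Fin d → ℝ} {v : Fin d → ℝ}
    (hv : v ∈ Psi x n) {S : Finset ι} (hS : S.card = Fintype.card ι - n) :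
    v ∈ convexHull ℝ (x '' (S : Set ι)) := by
  simp only [Psi, Set.mem_iInter, Set.mem_setOf_eq] at hv
  exact hv S hS

lemma coord_le_of_mem_convexHull {d : ℕ} {p : Fin d} {c : ℝ} {s : Set (Fin d → ℝ)}
    (h : ∀ v ∈ s, v p ≤ c) {w : Fin d → ℝ} (hw : w ∈ convexHull ℝ s) : w p ≤ c := by
  have hconv : Convex ℝ {v : Fin d → ℝ | v p ≤ c} :=
    convex_halfSpace_le ⟨fun a b => rfl, fun a b => rfl⟩ c
  exact convexHull_min h hconv hw

theorem stmt10 {V : Type*} [Fintype V] [DecidableEq V]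
    (d F : ℕ) (hd : 0 < d) (G : SimpleGraph V) [DecidableRel G.Adj]
    (Fset : Finset V) (x : ℕ → V → (Fin d → ℝ))
    (msg : ℕ → V → V → (Fin d → ℝ))
    (halg : Algo1 d F hd G Fset x msg)
    (hlocal : ∀ i : V, (Fset ∩ G.neighborFinset i).card ≤ F)
    (k : ℕ) (i : V) (hi : i ∉ Fset) (M ε : ℝ) (hε : 0 ≤ ε)
    (hub : ∀ j : V, j ∉ Fset → x k j ⟨k % d, Nat.mod_lt k hd⟩ ≤ M)
    (hmany : d * F + 1 ≤ ((G.neighborFinset i).filter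
      (fun j : V => msg k j i ⟨k % d, Nat.mod_lt k hd⟩ ≤ M - ε)).card) :
    x (k + 1) i ⟨k % d, Nat.mod_lt k hd⟩ ≤ M - ε / 3 := by
  set p : Fin d := ⟨k % d, Nat.mod_lt k hd⟩ with hp
  obtain ⟨Y, Z, yv, zv, hYsub, hZsub, hYcard, hZcard, hYsort, hZsort, hyv, hzv, hupd⟩ :=
    halg.update k i hi
  -- the set of "good" neighbors
  set W : Finset V := (G.neighborFinset i).filter
      (fun j : V => msg k j i p ≤ M - ε) with hW
  -- Step 1: Y contains ≥ dF+1 elements with msg_p ≤ M - ε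
  have hT : d * F + 1 ≤ (Y.filter (fun j => msg k j i p ≤ M - ε)).card := by
    by_cases hWY : W ⊆ Y
    · calc d * F + 1 ≤ W.card := hmany
        _ ≤ _ := by
          apply Finset.card_le_card
          intro w hw
          rw [Finset.mem_filter]
          exact ⟨hWY hw, (Finset.mem_filter.mp hw).2⟩
    · obtain ⟨w, hwW, hwY⟩ := Finset.not_subset.mp hWY
      rw [hW, Finset.mem_filter] at hwW
      have : Y.filter (fun j => msg k j i p ≤ M - ε) = Y := by
        apply Finset.filter_true_of_mem
        intro a ha
        exact le_trans (hYsort a ha w hwW.1 hwY) hwW.2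
      rw [this, hYcard]; nlinarith [Nat.zero_le F]
  -- Step 2: Z contains ≥ dF+1 benign elements
  have hT' : d * F + 1 ≤ (Z.filter (fun j => j ∉ Fset)).card := by
    have h1 : (Z.filter (fun j => j ∈ Fset)).card ≤ F := by
      calc (Z.filter (fun j => j ∈ Fset)).card
          ≤ (Fset ∩ G.neighborFinset i).card := by
            apply Finset.card_le_card
            intro a ha
            rw [Finset.mem_filter] at ha
            exact Finset.mem_inter.mpr ⟨ha.2, hZsub ha.1⟩
        _ ≤ F := hlocal i
    have h2 := Finset.card_filter_add_card_filter_not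
      (s := Z) (p := fun j => j ∈ Fset)
    rw [hZcard] at h2
    have h3 : (d + 1) * F + 1 = d * F + F + 1 := by ring
    linarith
  -- extract exact-size subsets
  obtain ⟨BY, hBYsub, hBYcard⟩ := Finset.exists_subset_card_eq hT
  obtain ⟨BZ, hBZsub, hBZcard⟩ := Finset.exists_subset_card_eq hT'
  have hBYY : BY ⊆ Y := hBYsub.trans (Finset.filter_subset _ _)
  have hBZZ : BZ ⊆ Z := hBZsub.trans (Finset.filter_subset _ _)
  -- coordinate bound for yv
  have hyvp : yv p ≤ M - ε := by
    have hScard : (BY.subtype (· ∈ Y)).card = Fintype.card Y - F := by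
      rw [Finset.card_subtype, Finset.filter_true_of_mem (fun a ha => hBYY ha),
        Fintype.card_coe, hYcard, hBYcard]
      have h3 : (d + 1) * F + 1 = (d * F + 1) + F := by ring
      rw [h3, Nat.add_sub_cancel]
    refine coord_le_of_mem_convexHull ?_ (psi_sub hyv hScard)
    rintro v ⟨j, hj, rfl⟩
    have : (j : V) ∈ BY := by
      simpa [Finset.mem_subtype] using hj
    have := hBYsub this
    rw [Finset.mem_filter] at this
    exact this.2
  -- coordinate bound for zv
  have hzvp : zv p ≤ M := by
    have hScard : (BZ.subtype (· ∈ Z)).card = Fintype.card Z - F := by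
      rw [Finset.card_subtype, Finset.filter_true_of_mem (fun a ha => hBZZ ha),
        Fintype.card_coe, hZcard, hBZcard]
      have h3 : (d + 1) * F + 1 = (d * F + 1) + F := by ring
      rw [h3, Nat.add_sub_cancel]
    refine coord_le_of_mem_convexHull ?_ (psi_sub hzv hScard)
    rintro v ⟨j, hj, rfl⟩
    have hjB : (j : V) ∈ BZ := by
      simpa [Finset.mem_subtype] using hj
    have hjb := hBZsub hjB
    rw [Finset.mem_filter] at hjb
    show msg k (↑j) i p ≤ M
    rw [halg.benign_msg k j i hjb.2]
    exact hub j hjb.2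
  have hxp : x k i p ≤ M := hub i hi
  have : x (k + 1) i p = (1/3 : ℝ) * (x k i p + yv p + zv p) := by
    rw [hupd]; simp [Pi.smul_apply]
  rw [this]
  linarith
end

section
/- Under the Algorithm 1 setup with the F-local attack model, 𝓑 ≠ ∅, and G being ((d+1)F+1)-robust: for every p ∈ {1, …, d} and every k ≥ 0 with (k mod d) + 1 = p, Δ_p(k + d·|𝓑|) ≤ (1 − 1/(2·3^{d·|𝓑|})) · Δ_p(k). -/
/-- A graph is `r`-robust if for every pair of disjoint nonempty proper subsets
`V₁, V₂` of the vertex set, some agent in `V₁` has at least `r` neighbors outside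
`V₁`, or some agent in `V₂` has at least `r` neighbors outside `V₂`. -/
def RRobust {V : Type*} [Fintype V] [DecidableEq V]
    (G : SimpleGraph V) [DecidableRel G.Adj] (r : ℕ) : Prop :=
  ∀ V₁ V₂ : Finset V, V₁.Nonempty → V₂.Nonempty → Disjoint V₁ V₂ →
    V₁ ≠ Finset.univ → V₂ ≠ Finset.univ →
    (∃ i ∈ V₁, r ≤ (G.neighborFinset i \ V₁).card) ∨
    (∃ i ∈ V₂, r ≤ (G.neighborFinset i \ V₂).card)

/-- A graph is `(r, s)`-robust if for every pair of disjoint nonempty proper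
subsets `V₁, V₂` of the vertex set, either every agent in `V₁` has at least `r`
neighbors outside `V₁`, or every agent in `V₂` has at least `r` neighbors outside
`V₂`, or at least `s` agents in `V₁ ∪ V₂` have at least `r` neighbors outside the
set among `V₁`, `V₂` containing them. -/
def RSRobust {V : Type*} [Fintype V] [DecidableEq V]
    (G : SimpleGraph V) [DecidableRel G.Adj] (r s : ℕ) : Prop :=
  ∀ V₁ V₂ : Finset V, V₁.Nonempty → V₂.Nonempty → Disjoint V₁ V₂ →
    V₁ ≠ Finset.univ → V₂ ≠ Finset.univ →
    (∀ i ∈ V₁, r ≤ (G.neighborFinset i \ V₁).card) ∨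
    (∀ i ∈ V₂, r ≤ (G.neighborFinset i \ V₂).card) ∨
    s ≤ ((V₁.filter (fun i => r ≤ (G.neighborFinset i \ V₁).card)) ∪
         (V₂.filter (fun i => r ≤ (G.neighborFinset i \ V₂).card))).card


open Finset

lemma mem_of_mem_Psi {d n : ℕ} {ι : Type*} [Fintype ι] {x : ι → Fin d → ℝ} {y : Fin d → ℝ}
    (hy : y ∈ Psi x n) {C : Set (Fin d → ℝ)} (hC : Convex ℝ C) (hn : n ≤ Fintype.card ι)
    (E : Finset ι) (hE : #E ≤ n) (hxC : ∀ j ∉ E, x j ∈ C) : y ∈ C := by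
  classical
  obtain ⟨D, hED, -, hD⟩ := exists_subsuperset_card_eq (subset_univ E) hE (by simpa using hn)
  have hS : #Dᶜ = Fintype.card ι - n := by rw [card_compl, hD]
  refine convexHull_min ?_ hC (Set.mem_iInter₂.1 hy Dᶜ hS)
  rintro _ ⟨j, hj, rfl⟩
  exact hxC j fun hjE => mem_compl.1 hj (hED hjE)

lemma mem_of_mem_Psi_finset {V : Type*} [DecidableEq V] {d n : ℕ} {Y : Finset V}
    {g : V → Fin d → ℝ} {y : Fin d → ℝ} (hy : y ∈ Psi (fun j : Y => g j) n)
    {C : Set (Fin d → ℝ)} (hC : Convex ℝ C) (hn : n ≤ #Y)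
    (E : Finset V) (hE : #E ≤ n) (hgC : ∀ j ∈ Y, j ∉ E → g j ∈ C) : y ∈ C := by
  refine mem_of_mem_Psi hy hC (by simpa using hn) (E.subtype (· ∈ Y)) ?_
    fun j hj => hgC j j.2 fun hjE => hj (mem_subtype.2 hjE)
  rw [card_subtype]
  exact (card_filter_le _ _).trans hE

lemma neg_mem_Psi {d n : ℕ} {ι : Type*} [Fintype ι] {x : ι → Fin d → ℝ} {y : Fin d → ℝ}
    (hy : y ∈ Psi x n) : -y ∈ Psi (-x) n := by
  simp only [Psi, Set.mem_iInter] at hy ⊢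
  intro S hS
  rw [show (-x) '' S = -(x '' S) by rw [← Set.image_neg_eq_neg, Set.image_image]; rfl,
    convexHull_neg]
  exact Set.neg_mem_neg.2 (hy S hS)

lemma convex_coord_le {d : ℕ} (p : Fin d) (c : ℝ) : Convex ℝ {v : Fin d → ℝ | v p ≤ c} :=
  convex_halfSpace_le (f := fun v : Fin d → ℝ => v p) ⟨fun _ _ => rfl, fun _ _ => rfl⟩ c

lemma eq_empty_or_eq_empty_of_card_add_lt {α : Type*} {A B : ℕ → Finset α} {d n : ℕ}
    (hd : 0 < d) (hA : Antitone A) (hB : Antitone B) (h0 : #(A 0) + #(B 0) ≤ n)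
    (hdrop : ∀ s, (A (d * s)).Nonempty → (B (d * s)).Nonempty →
      #(A (d * s + 1)) + #(B (d * s + 1)) < #(A (d * s)) + #(B (d * s))) :
    A (d * n) = ∅ ∨ B (d * n) = ∅ := by
  have key : ∀ s, (A (d * s)).Nonempty → (B (d * s)).Nonempty →
      #(A (d * s)) + #(B (d * s)) + s ≤ n := by
    intro s
    induction s with
    | zero => intros; simpa using h0
    | succ s ih =>
      intro hAs hBs
      have hle : d * s + 1 ≤ d * (s + 1) := by rw [mul_add_one]; omega
      have hle' : d * s ≤ d * (s + 1) := by omega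
      have hAs' := hAs.mono (hA hle')
      have hBs' := hBs.mono (hB hle')
      have := ih hAs' hBs'
      have := hdrop s hAs' hBs'
      have := card_le_card (hA hle)
      have := card_le_card (hB hle)
      omega
  by_contra! h
  have := key n h.1 h.2
  have := card_pos.2 h.1
  omega

section Algo1

variable {V : Type*} [Fintype V] [DecidableEq V] {d F : ℕ} {hd : 0 < d} {G : SimpleGraph V}
  [DecidableRel G.Adj] {Fset : Finset V} {x : ℕ → V → Fin d → ℝ} {msg : ℕ → V → V → Fin d → ℝ}

theorem Algo1.neg (halg : Algo1 d F hd G Fset x msg) : Algo1 d F hd G Fset (-x) (-msg) where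
  degree := halg.degree
  benign_msg k j i hj := by simp [halg.benign_msg k j i hj]
  update k i hi := by
    obtain ⟨Y, Z, y, z, hYN, hZN, hYc, hZc, hYs, hZs, hy, hz, hupd⟩ := halg.update k i hi
    refine ⟨Z, Y, -z, -y, hZN, hYN, hZc, hYc, fun a ha b hb hbZ => ?_, fun a ha b hb hbY => ?_,
      neg_mem_Psi hz, neg_mem_Psi hy, ?_⟩
    · simpa using hZs a ha b hb hbZ
    · simpa using hYs a ha b hb hbY
    · simp only [Pi.neg_apply, hupd]
      module

theorem Algo1.coord_le_of_mem_Psi (halg : Algo1 d F hd G Fset x msg)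
    (hlocal : ∀ i : V, #(Fset ∩ G.neighborFinset i) ≤ F) {t : ℕ} {p : Fin d} {M : ℝ}
    (hM : ∀ j ∉ Fset, x t j p ≤ M) {i : V} {W : Finset V} (hW : W ⊆ G.neighborFinset i)
    (hWc : F ≤ #W) {w : Fin d → ℝ} (hw : w ∈ Psi (fun j : W => msg t j i) F) : w p ≤ M := by
  refine mem_of_mem_Psi_finset (g := fun j => msg t j i) hw (convex_coord_le p M) hWc _ (hlocal i)
    fun j hjW hjE => ?_
  have hj : j ∉ Fset := fun hjF => hjE (mem_inter.2 ⟨hjF, hW hjW⟩)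
  show msg t j i p ≤ M
  rw [halg.benign_msg t j i hj]
  exact hM j hj

theorem Algo1.coord_succ_le (halg : Algo1 d F hd G Fset x msg)
    (hlocal : ∀ i : V, #(Fset ∩ G.neighborFinset i) ≤ F) {t : ℕ} {p : Fin d} {M : ℝ}
    (hM : ∀ j ∉ Fset, x t j p ≤ M) {i : V} (hi : i ∉ Fset) :
    x (t + 1) i p ≤ (x t i p + 2 * M) / 3 := by
  obtain ⟨Y, Z, y, z, hYN, hZN, hYc, hZc, -, -, hy, hz, hupd⟩ := halg.update t i hi
  have hF : F ≤ (d + 1) * F + 1 := Nat.le_succ_of_le (Nat.le_mul_of_pos_left F d.succ_pos)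
  have hFY : F ≤ #Y := hYc ▸ hF
  have hFZ : F ≤ #Z := hZc ▸ hF
  have hyM := halg.coord_le_of_mem_Psi hlocal hM hYN hFY hy
  have hzM := halg.coord_le_of_mem_Psi hlocal hM hZN hFZ hz
  rw [hupd]
  simp only [Pi.smul_apply, Pi.add_apply, smul_eq_mul]
  linarith

/-- At a time sorting on coordinate `p`, `Y` consists of the smallest received values, so
`(d + 1)F + 1` neighbours with benign values at most `c` pull `y` below `c`: either they all lie in
`Y`, and then at most `F` members of `Y` lie above `c`, or one of them is left out, and then all of
`Y` lies below it. -/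
theorem Algo1.coord_succ_le_of_sorted (halg : Algo1 d F hd G Fset x msg)
    (hlocal : ∀ i : V, #(Fset ∩ G.neighborFinset i) ≤ F) {t : ℕ} {p : Fin d}
    (hp : (p : ℕ) = t % d) {M c : ℝ} (hM : ∀ j ∉ Fset, x t j p ≤ M) {i : V} (hi : i ∉ Fset)
    {T : Finset V} (hTN : T ⊆ G.neighborFinset i) (hTc : (d + 1) * F + 1 ≤ #T)
    (hTval : ∀ j ∈ T, j ∉ Fset → x t j p ≤ c) :
    x (t + 1) i p ≤ (2 * M + c) / 3 := by
  obtain ⟨Y, Z, y, z, hYN, hZN, hYc, hZc, hYs, -, hy, hz, hupd⟩ := halg.update t i hi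
  rw [show (⟨t % d, Nat.mod_lt t hd⟩ : Fin d) = p from Fin.ext hp.symm] at hYs
  have hF : F ≤ (d + 1) * F + 1 := Nat.le_succ_of_le (Nat.le_mul_of_pos_left F d.succ_pos)
  have hFY : F ≤ #Y := hYc ▸ hF
  have hFZ : F ≤ #Z := hZc ▸ hF
  have hbenign : d * F + 1 ≤ #(T \ Fset) := by
    have hfaulty : #(T ∩ Fset) ≤ F :=
      (card_le_card (inter_comm T Fset ▸ inter_subset_inter_left hTN)).trans (hlocal i)
    have := card_sdiff_add_card_inter T Fset
    linarith
  have hyc : y p ≤ c := by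
    by_cases hTY : T \ Fset ⊆ Y
    · refine mem_of_mem_Psi_finset (g := fun j => msg t j i) hy (convex_coord_le p c) hFY
        (Y \ (T \ Fset)) ?_ fun j hjY hjE => ?_
      · have := card_sdiff_add_card_eq_card hTY
        linarith
      · have hjT : j ∈ T \ Fset := by simpa [hjY] using hjE
        obtain ⟨hjT, hjF⟩ := mem_sdiff.1 hjT
        show msg t j i p ≤ c
        rw [halg.benign_msg t j i hjF]
        exact hTval j hjT hjF
    · obtain ⟨j₀, hj₀T, hj₀Y⟩ := not_subset.1 hTY
      obtain ⟨hj₀T, hj₀F⟩ := mem_sdiff.1 hj₀T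
      refine mem_of_mem_Psi_finset (g := fun j => msg t j i) hy (convex_coord_le p c) hFY ∅
        (by simp) fun j hjY _ => ?_
      show msg t j i p ≤ c
      calc msg t j i p ≤ msg t j₀ i p := hYs j hjY j₀ (hTN hj₀T) hj₀Y
        _ = x t j₀ p := by rw [halg.benign_msg t j₀ i hj₀F]
        _ ≤ c := hTval j₀ hj₀T hj₀F
  have hzM := halg.coord_le_of_mem_Psi hlocal hM hZN hFZ hz
  have hxM := hM i hi
  rw [hupd]
  simp only [Pi.smul_apply, Pi.add_apply, smul_eq_mul]
  linarith

theorem Algo1.coord_le_of_le (halg : Algo1 d F hd G Fset x msg)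
    (hlocal : ∀ i : V, #(Fset ∩ G.neighborFinset i) ≤ F) {k : ℕ} {p : Fin d} {M : ℝ}
    (hM : ∀ j ∉ Fset, x k j p ≤ M) (s : ℕ) : ∀ j ∉ Fset, x (k + s) j p ≤ M := by
  induction s with
  | zero => exact hM
  | succ s ih =>
    intro j hj
    have := halg.coord_succ_le hlocal ih hj
    have := ih j hj
    rw [← add_assoc]
    linarith

variable (Fset x) in
noncomputable def nearTop (p : Fin d) (k : ℕ) (M δ : ℝ) (s : ℕ) : Finset V :=
  {i ∈ Fsetᶜ | M - δ / 3 ^ s < x (k + s) i p}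

lemma nearTop_threshold_succ (M δ : ℝ) (s : ℕ) :
    M - δ / 3 ^ (s + 1) = (M - δ / 3 ^ s + 2 * M) / 3 := by
  rw [pow_succ]
  field_simp
  ring

theorem Algo1.antitone_nearTop (halg : Algo1 d F hd G Fset x msg)
    (hlocal : ∀ i : V, #(Fset ∩ G.neighborFinset i) ≤ F) {k : ℕ} {p : Fin d} {M : ℝ}
    (hM : ∀ j ∉ Fset, x k j p ≤ M) (δ : ℝ) : Antitone (nearTop Fset x p k M δ) := by
  refine antitone_nat_of_succ_le fun s i hi => ?_
  simp only [nearTop, mem_filter, mem_compl] at hi ⊢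
  refine ⟨hi.1, lt_of_not_ge fun hle => hi.2.not_ge ?_⟩
  have := halg.coord_succ_le hlocal (halg.coord_le_of_le hlocal hM s) hi.1
  rw [nearTop_threshold_succ, ← add_assoc]
  linarith

theorem Algo1.card_nearTop_succ_lt (halg : Algo1 d F hd G Fset x msg)
    (hlocal : ∀ i : V, #(Fset ∩ G.neighborFinset i) ≤ F) {k : ℕ} {p : Fin d} {M δ : ℝ}
    (hM : ∀ j ∉ Fset, x k j p ≤ M) {s : ℕ} (hp : (p : ℕ) = (k + s) % d) {i : V}
    (hi : i ∈ nearTop Fset x p k M δ s)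
    (hout : (d + 1) * F + 1 ≤ #(G.neighborFinset i \ nearTop Fset x p k M δ s)) :
    #(nearTop Fset x p k M δ (s + 1)) < #(nearTop Fset x p k M δ s) := by
  refine card_lt_card ((ssubset_iff_of_subset (halg.antitone_nearTop hlocal hM δ
    s.le_succ)).2 ⟨i, hi, fun hi' => ?_⟩)
  have hiF : i ∉ Fset := mem_compl.1 (mem_filter.1 hi).1
  have hstep := halg.coord_succ_le_of_sorted hlocal hp (halg.coord_le_of_le hlocal hM s) hiF
    sdiff_subset hout (c := M - δ / 3 ^ s) fun j hj hjF => by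
      simpa [nearTop, hjF] using (mem_sdiff.1 hj).2
  have hlt : M - δ / 3 ^ (s + 1) < x (k + s + 1) i p := (mem_filter.1 hi').2
  rw [nearTop_threshold_succ] at hlt
  linarith

theorem Algo1.le_coord_of_le (halg : Algo1 d F hd G Fset x msg)
    (hlocal : ∀ i : V, #(Fset ∩ G.neighborFinset i) ≤ F) {k : ℕ} {p : Fin d} {m : ℝ}
    (hm : ∀ j ∉ Fset, m ≤ x k j p) (s : ℕ) : ∀ j ∉ Fset, m ≤ x (k + s) j p := fun j hj =>
  neg_le_neg_iff.1 (halg.neg.coord_le_of_le hlocal (fun j hj => neg_le_neg (hm j hj)) s j hj)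

theorem Algo1.disjoint_nearTop (halg : Algo1 d F hd G Fset x msg)
    (hlocal : ∀ i : V, #(Fset ∩ G.neighborFinset i) ≤ F) {k : ℕ} {p : Fin d} {m M : ℝ}
    (hm : ∀ j ∉ Fset, m ≤ x k j p) (hM : ∀ j ∉ Fset, x k j p ≤ M) (s : ℕ) :
    Disjoint (nearTop Fset x p k M ((M - m) / 2) s)
      (nearTop Fset (-x) p k (-m) ((M - m) / 2) s) := by
  refine disjoint_left.2 fun i hiA hiB => ?_
  simp only [nearTop, mem_filter, mem_compl, Pi.neg_apply] at hiA hiB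
  have hmM : m ≤ M :=
    (halg.le_coord_of_le hlocal hm s i hiA.1).trans (halg.coord_le_of_le hlocal hM s i hiA.1)
  have : (M - m) / 2 / 3 ^ s ≤ (M - m) / 2 :=
    div_le_self (by linarith) (one_le_pow₀ (by norm_num))
  linarith [hiA.2, hiB.2]

theorem Algo1.card_nearTop_add_lt (halg : Algo1 d F hd G Fset x msg)
    (hlocal : ∀ i : V, #(Fset ∩ G.neighborFinset i) ≤ F)
    (hrobust : RRobust G ((d + 1) * F + 1)) {k : ℕ} {p : Fin d} {m M δ : ℝ}
    (hm : ∀ j ∉ Fset, m ≤ x k j p) (hM : ∀ j ∉ Fset, x k j p ≤ M) {s : ℕ}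
    (hp : (p : ℕ) = (k + s) % d) (hA : (nearTop Fset x p k M δ s).Nonempty)
    (hB : (nearTop Fset (-x) p k (-m) δ s).Nonempty)
    (hAB : Disjoint (nearTop Fset x p k M δ s) (nearTop Fset (-x) p k (-m) δ s)) :
    #(nearTop Fset x p k M δ (s + 1)) + #(nearTop Fset (-x) p k (-m) δ (s + 1)) <
      #(nearTop Fset x p k M δ s) + #(nearTop Fset (-x) p k (-m) δ s) := by
  have hm' : ∀ j ∉ Fset, (-x) k j p ≤ -m := fun j hj => neg_le_neg (hm j hj)
  obtain ⟨a, ha⟩ := hA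
  obtain ⟨b, hb⟩ := hB
  rcases hrobust _ _ ⟨a, ha⟩ ⟨b, hb⟩ hAB (fun h => disjoint_left.1 hAB (h ▸ mem_univ b) hb)
    (fun h => disjoint_left.1 hAB ha (h ▸ mem_univ a)) with ⟨i, hi, hout⟩ | ⟨i, hi, hout⟩
  · have := halg.card_nearTop_succ_lt hlocal hM hp hi hout
    have := card_le_card (halg.neg.antitone_nearTop hlocal hm' δ (Nat.le_add_right s 1))
    omega
  · have := halg.neg.card_nearTop_succ_lt hlocal hm' hp hi hout
    have := card_le_card (halg.antitone_nearTop hlocal hM δ (Nat.le_add_right s 1))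
    omega

theorem Algo1.forall_coord_le_or_forall_le_coord (halg : Algo1 d F hd G Fset x msg)
    (hlocal : ∀ i : V, #(Fset ∩ G.neighborFinset i) ≤ F)
    (hrobust : RRobust G ((d + 1) * F + 1)) {k : ℕ} {p : Fin d} (hp : (p : ℕ) = k % d)
    {m M : ℝ} (hm : ∀ j ∉ Fset, m ≤ x k j p) (hM : ∀ j ∉ Fset, x k j p ≤ M) :
    (∀ i ∉ Fset, x (k + d * #Fsetᶜ) i p ≤ M - (M - m) / (2 * 3 ^ (d * #Fsetᶜ))) ∨
      (∀ i ∉ Fset, m + (M - m) / (2 * 3 ^ (d * #Fsetᶜ)) ≤ x (k + d * #Fsetᶜ) i p) := by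
  have hm' : ∀ j ∉ Fset, (-x) k j p ≤ -m := fun j hj => neg_le_neg (hm j hj)
  have hdisj := halg.disjoint_nearTop hlocal hm hM
  have h0 : #(nearTop Fset x p k M ((M - m) / 2) 0) +
      #(nearTop Fset (-x) p k (-m) ((M - m) / 2) 0) ≤ #Fsetᶜ := by
    rw [← card_union_of_disjoint (hdisj 0)]
    exact card_le_card (union_subset (filter_subset _ _) (filter_subset _ _))
  rcases eq_empty_or_eq_empty_of_card_add_lt hd (halg.antitone_nearTop hlocal hM _)
    (halg.neg.antitone_nearTop hlocal hm' _) h0 fun s hA hB =>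
      halg.card_nearTop_add_lt hlocal hrobust hm hM (by rwa [Nat.add_mul_mod_self_left]) hA hB
        (hdisj _) with h | h
  · refine .inl fun i hi => ?_
    have := filter_eq_empty_iff.1 h (mem_compl.2 hi)
    rw [div_div] at this
    exact not_lt.1 this
  · refine .inr fun i hi => ?_
    have := filter_eq_empty_iff.1 h (mem_compl.2 hi)
    rw [div_div, Pi.neg_apply, Pi.neg_apply, Pi.neg_apply] at this
    linarith [not_lt.1 this]

end Algo1

theorem stmt11 {V : Type*} [Fintype V] [DecidableEq V]
    (d F : ℕ) (hd : 0 < d) (G : SimpleGraph V) [DecidableRel G.Adj]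
    (Fset : Finset V) (x : ℕ → V → (Fin d → ℝ))
    (msg : ℕ → V → V → (Fin d → ℝ))
    (halg : Algo1 d F hd G Fset x msg)
    (hB : (Fsetᶜ : Finset V).Nonempty)
    (hlocal : ∀ i : V, (Fset ∩ G.neighborFinset i).card ≤ F)
    (hrobust : RRobust G ((d + 1) * F + 1)) :
    ∀ (p : Fin d) (k : ℕ), (p : ℕ) = k % d →
      (Fsetᶜ : Finset V).sup' hB (fun i => x (k + d * (Fsetᶜ : Finset V).card) i p) -
          (Fsetᶜ : Finset V).inf' hB (fun i => x (k + d * (Fsetᶜ : Finset V).card) i p) ≤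
        (1 - 1 / (2 * (3 : ℝ) ^ (d * (Fsetᶜ : Finset V).card))) *
          ((Fsetᶜ : Finset V).sup' hB (fun i => x k i p) -
            (Fsetᶜ : Finset V).inf' hB (fun i => x k i p)) := by
  intro p k hp
  set M := Fsetᶜ.sup' hB fun i => x k i p
  set m := Fsetᶜ.inf' hB fun i => x k i p
  have hM : ∀ i ∉ Fset, x k i p ≤ M := fun i hi => le_sup' (fun i => x k i p) (mem_compl.2 hi)
  have hm : ∀ i ∉ Fset, m ≤ x k i p := fun i hi => inf'_le (fun i => x k i p) (mem_compl.2 hi)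
  have hM' := halg.coord_le_of_le hlocal hM (d * #Fsetᶜ)
  have hm' := halg.le_coord_of_le hlocal hm (d * #Fsetᶜ)
  rw [show (1 - 1 / (2 * (3 : ℝ) ^ (d * #Fsetᶜ))) * (M - m) =
    M - m - (M - m) / (2 * 3 ^ (d * #Fsetᶜ)) by ring]
  rcases halg.forall_coord_le_or_forall_le_coord hlocal hrobust hp hm hM with h | h
  · have := sup'_le hB _ fun i hi => h i (mem_compl.1 hi)
    have := le_inf' hB _ fun i hi => hm' i (mem_compl.1 hi)
    linarith
  · have := sup'_le hB _ fun i hi => hM' i (mem_compl.1 hi)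
    have := le_inf' hB _ fun i hi => h i (mem_compl.1 hi)
    linarith
end

section
/- Let d ≥ 1 and F ≥ 0 be integers and let G = (V, E) be a graph on a finite vertex set. If G is ((d+1)F+1)-robust, then G is (dF+1, F+1)-robust. -/
theorem stmt15 {V : Type*} [Fintype V] [DecidableEq V]
    (d F : ℕ) (hd : 1 ≤ d) (G : SimpleGraph V) [DecidableRel G.Adj]
    (h : RRobust G ((d + 1) * F + 1)) :
    RSRobust G (d * F + 1) (F + 1) := by
  intro V₁ V₂ h₁ h₂ hdisj hu₁ hu₂
  by_contra hcon
  push_neg at hcon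
  obtain ⟨⟨a, ha, haf⟩, ⟨b, hb, hbf⟩, hcard⟩ := hcon
  set X₁ := V₁.filter (fun i => d * F + 1 ≤ (G.neighborFinset i \ V₁).card) with hX₁
  set X₂ := V₂.filter (fun i => d * F + 1 ≤ (G.neighborFinset i \ V₂).card) with hX₂
  have hX₁card : X₁.card ≤ F := by
    have h1 : X₁.card ≤ (X₁ ∪ X₂).card := Finset.card_le_card Finset.subset_union_left
    omega
  have hX₂card : X₂.card ≤ F := by
    have h1 : X₂.card ≤ (X₁ ∪ X₂).card := Finset.card_le_card Finset.subset_union_right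
    omega
  have ha' : a ∈ V₁ \ X₁ := by
    simp only [Finset.mem_sdiff, hX₁, Finset.mem_filter]
    exact ⟨ha, fun hc => absurd hc.2 (by omega)⟩
  have hb' : b ∈ V₂ \ X₂ := by
    simp only [Finset.mem_sdiff, hX₂, Finset.mem_filter]
    exact ⟨hb, fun hc => absurd hc.2 (by omega)⟩
  have hsub₁ : V₁ \ X₁ ⊆ V₁ := Finset.sdiff_subset
  have hsub₂ : V₂ \ X₂ ⊆ V₂ := Finset.sdiff_subset
  have hne₁ : V₁ \ X₁ ≠ Finset.univ := fun hc => hu₁ (Finset.univ_subset_iff.mp (hc ▸ hsub₁))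
  have hne₂ : V₂ \ X₂ ≠ Finset.univ := fun hc => hu₂ (Finset.univ_subset_iff.mp (hc ▸ hsub₂))
  have key : ∀ (W X : Finset V) (i : V), i ∈ W \ X →
      ¬ (d * F + 1 ≤ (G.neighborFinset i \ W).card) → X.card ≤ F →
      ¬ ((d + 1) * F + 1 ≤ (G.neighborFinset i \ (W \ X)).card) := by
    intro W X i hi hismall hXF hbig
    have hsub : G.neighborFinset i \ (W \ X) ⊆ (G.neighborFinset i \ W) ∪ X := by
      intro j hj
      simp only [Finset.mem_sdiff, Finset.mem_union, Finset.mem_sdiff] at hj ⊢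
      rcases hj with ⟨hadj, hj⟩
      by_cases hjW : j ∈ W
      · right; by_contra hjX; exact hj ⟨hjW, hjX⟩
      · left; exact ⟨hadj, hjW⟩
    have hc1 : (G.neighborFinset i \ (W \ X)).card ≤
        (G.neighborFinset i \ W).card + X.card :=
      le_trans (Finset.card_le_card hsub) (Finset.card_union_le _ _)
    have he : (d + 1) * F = d * F + F := by ring
    omega
  rcases h (V₁ \ X₁) (V₂ \ X₂) ⟨a, ha'⟩ ⟨b, hb'⟩
      (Finset.disjoint_of_subset_left hsub₁ (Finset.disjoint_of_subset_right hsub₂ hdisj))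
      hne₁ hne₂ with ⟨i, hi, hr⟩ | ⟨i, hi, hr⟩
  · have hi' := hi
    simp only [Finset.mem_sdiff, hX₁, Finset.mem_filter] at hi'
    exact key V₁ X₁ i hi (fun hc => hi'.2 ⟨hi'.1, hc⟩) hX₁card hr
  · have hi' := hi
    simp only [Finset.mem_sdiff, hX₂, Finset.mem_filter] at hi'
    exact key V₂ X₂ i hi (fun hc => hi'.2 ⟨hi'.1, hc⟩) hX₂card hr
end
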